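/- Suppose the OSC holds with open sets (U_v)_{v∈V}, and fix paths (l_v)_{v∈V} of common length l with S_{l_v}(F_{t(l_v)}) ⊆ U_v and constants c_v = dist(S_{l_v}(F_{t(l_v)}), ℝ^m ∖ U_v) > 0. Let e = e₁⋯e_k and g = g₁⋯g_j be finite paths in E_u^* whose first edges differ (e₁ ≠ g₁), and suppose dist(S_e(F_{t(e)}), S_g(F_{t(g)})) ≤ c_w · r_g for some vertex w ∈ V. Then l_w is not a subpath of g₂⋯g_j. -/

import Mathlib

open MeasureTheory Metric Set Filter Topology Asymptotics

noncomputable section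

/-- Euclidean space `ℝ^m`. -/
abbrev Euc (m : ℕ) : Type := EuclideanSpace ℝ (Fin m)

/-- The topological support of a measure. -/
def mSupport {X : Type} [TopologicalSpace X] [MeasurableSpace X]
    (μ : Measure X) : Set X :=
  {x | ∀ U : Set X, IsOpen U → x ∈ U → 0 < μ U}

/-- The probability weight of a finite path (product of its edge weights). -/
def pathProb {E : Type} (w : E → ℝ) (p : List E) : ℝ := (p.map w).prod

/-- `f` is a subpath of `g`. -/
def IsSubpath {E : Type} (f g : List E) : Prop := ∃ s t : List E, g = s ++ f ++ t

/-- The distance between two sets. -/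
def setDist {X : Type} [PseudoMetricSpace X] (A B : Set X) : ℝ :=
  sInf (Set.image2 dist A B)

/-- The `q`-th packing moment `M_u^q(A,r)` of a measure `μ` on `A` at scale `r`:
the supremum of `∑_{x∈D} μ(B̄(x,r))^q` over `r`-separated finite subsets `D ⊆ A`. -/
def packMoment {m : ℕ} (μ : Measure (Euc m)) (q : ℝ) (A : Set (Euc m)) (r : ℝ) : ℝ :=
  sSup {s : ℝ | ∃ D : Finset (Euc m), ↑D ⊆ A ∧
    (∀ x ∈ D, ∀ y ∈ D, x ≠ y → 2 * r < dist x y) ∧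
    s = ∑ x ∈ D, (μ (Metric.closedBall x r)).toReal ^ q}

/-- The spectral radius of a real square matrix (via its complex spectrum). -/
def specRad {n : Type} [Fintype n] [DecidableEq n] (M : Matrix n n ℝ) : ENNReal :=
  spectralRadius ℂ (M.map (algebraMap ℝ ℂ))

/-- A matrix is irreducible if some power has a positive `ij` entry, for every `i j`. -/
def MatIrreducible {n : Type} [Fintype n] [DecidableEq n] (M : Matrix n n ℝ) : Prop :=
  ∀ i j : n, ∃ k : ℕ, 0 < (M ^ k) i j

/-- A self-similar directed-graph IFS on `ℝ^m`: a finite strongly connected directed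
multigraph with at least two edges out of each vertex, each edge carrying a contracting
similarity of `ℝ^m`. -/
structure GIFS (m : ℕ) (V E : Type) [Fintype V] [Fintype E] where
  src : E → V
  dst : E → V
  ratio : E → ℝ
  ratio_pos : ∀ e, 0 < ratio e
  ratio_lt_one : ∀ e, ratio e < 1
  map : E → Euc m → Euc m
  map_similarity : ∀ e x y, dist (map e x) (map e y) = ratio e * dist x y
  two_edges : ∀ u : V, ∃ e f : E, e ≠ f ∧ src e = u ∧ src f = u
  strongly_connected : ∀ u v : V, ∃ p : List E, p ≠ [] ∧
    p.Chain' (fun a b => dst a = src b) ∧ p.head?.map src = some u ∧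
    p.getLast?.map dst = some v

namespace GIFS

variable {m : ℕ} {V E : Type} [Fintype V] [Fintype E] (G : GIFS m V E)

/-- `p` is a directed path (consecutive edges match up). -/
def IsPath (p : List E) : Prop := p.Chain' (fun a b => G.dst a = G.src b)

/-- `p` is a nonempty directed path from `u` to `v`. -/
def IsPathFrom (u v : V) (p : List E) : Prop :=
  p ≠ [] ∧ G.IsPath p ∧ p.head?.map G.src = some u ∧ p.getLast?.map G.dst = some v

/-- The contraction `S_{e₁} ∘ ⋯ ∘ S_{e_k}` along a path. -/
def pathMap (p : List E) : Euc m → Euc m := p.foldr (fun e f => G.map e ∘ f) id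

/-- The contraction ratio along a path. -/
def pathRatio (p : List E) : ℝ := (p.map G.ratio).prod

/-- The terminal vertex of a path (with default `u` for the empty path). -/
def pathDst (u : V) (p : List E) : V := (p.getLast?.map G.dst).getD u

/-- `(F u)_{u ∈ V}` is the attractor: the unique list of nonempty compact sets with
`F u = ⋃_{e ∈ E_u¹} S_e(F_{t(e)})`. -/
def IsAttractor (F : V → Set (Euc m)) : Prop :=
  (∀ u, (F u).Nonempty) ∧ (∀ u, IsCompact (F u)) ∧
  (∀ u, F u = ⋃ e ∈ {e : E | G.src e = u}, G.map e '' F (G.dst e))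

/-- Probability weights on the edges: each in `(0,1)`, summing to `1` at each vertex. -/
def IsProbWeights (w : E → ℝ) : Prop :=
  (∀ e, w e ∈ Set.Ioo (0 : ℝ) 1) ∧
  (∀ u : V, ∑ e : E, Set.indicator {e : E | G.src e = u} w e = 1)

/-- `(μ u)_{u ∈ V}` are the self-similar measures: Borel probability measures with
`μ_u(A) = ∑_{e ∈ E_u¹} p_e μ_{t(e)}(S_e⁻¹(A))` and `supp μ_u = F u`. -/
def IsSelfSimilarMeasures (w : E → ℝ) (F : V → Set (Euc m)) (μ : V → Measure (Euc m)) : Prop :=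
  (∀ u, IsProbabilityMeasure (μ u)) ∧
  (∀ u (A : Set (Euc m)), MeasurableSet A →
    μ u A = ∑ e : E, Set.indicator {e : E | G.src e = u}
      (fun e => ENNReal.ofReal (w e) * μ (G.dst e) (G.map e ⁻¹' A)) e) ∧
  (∀ u, mSupport (μ u) = F u)

/-- The strong separation condition. -/
def SSC (F : V → Set (Euc m)) : Prop :=
  ∀ u : V, ∀ e f : E, G.src e = u → G.src f = u → e ≠ f →
    (G.map e '' F (G.dst e)) ∩ (G.map f '' F (G.dst f)) = ∅

/-- The open set condition with open sets `U`. -/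
def OSCWith (U : V → Set (Euc m)) : Prop :=
  (∀ u, (U u).Nonempty ∧ IsOpen (U u) ∧ Bornology.IsBounded (U u)) ∧
  (∀ e : E, G.map e '' U (G.dst e) ⊆ U (G.src e)) ∧
  (∀ u : V, ∀ e f : E, G.src e = u → G.src f = u → e ≠ f →
    (G.map e '' U (G.dst e)) ∩ (G.map f '' U (G.dst f)) = ∅)

/-- The open set condition. -/
def OSC : Prop := ∃ U : V → Set (Euc m), G.OSCWith U

variable [DecidableEq V]

/-- The matrix `A(q,β)` with `uv` entry `∑_{e ∈ E¹_{uv}} p_e^q r_e^β`. -/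
def matA (w : E → ℝ) (q β : ℝ) : Matrix V V ℝ :=
  Matrix.of fun u v => ∑ e : E,
    Set.indicator {e : E | G.src e = u ∧ G.dst e = v}
      (fun e => w e ^ q * G.ratio e ^ β) e

/-- The matrix `B(q,γ,l)` with `uv` entry `∑_{e ∈ E^l_{uv}, e ≠ l_u} p_e^q r_e^γ`. -/
def matB (w : E → ℝ) (q γ : ℝ) (l : ℕ) (lu : V → List E) : Matrix V V ℝ :=
  Matrix.of fun u v => ∑ p : List.Vector E l,
    Set.indicator {p : List.Vector E l | G.IsPathFrom u v p.toList ∧ p.toList ≠ lu u}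
      (fun p => pathProb w p.toList ^ q * G.pathRatio p.toList ^ γ) p

/-- The matrix of measures `P` with `uv` entry `∑_{e ∈ E¹_{uv}} p_e^q r_e^{β} δ_{ln(1/r_e)}`. -/
def matP (w : E → ℝ) (q β : ℝ) : V → V → Measure ℝ :=
  fun u v => ∑ e : E,
    (Set.indicator {e : E | G.src e = u ∧ G.dst e = v}
      (fun e => ENNReal.ofReal (w e ^ q * G.ratio e ^ β)) e) •
      Measure.dirac (Real.log ((G.ratio e)⁻¹))

end GIFS

/-- `P` is a lattice matrix of measures with span `lam`. -/
def IsLatticeMatrix {V : Type} (P : V → V → MeasureTheory.Measure ℝ) (lam : ℝ) : Prop :=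
  0 < lam ∧
  ∃ (L : V → V → ℝ) (b : V → V → ℝ),
    (∀ u v : V, 0 < L u v) ∧
    -- (a) each diagonal support generates the group `L u u • ℤ`
    (∀ u : V, AddSubgroup.closure (mSupport (P u u)) = AddSubgroup.zmultiples (L u u)) ∧
    -- (b) off-diagonal supports lie in `b u v + L u v • ℤ`, with `L u v` maximal
    (∀ u v : V, u ≠ v →
      (mSupport (P u v) ⊆ {x : ℝ | ∃ n : ℤ, x = b u v + n * L u v}) ∧
      (∀ L' : ℝ, 0 < L' →
        (∃ b' : ℝ, mSupport (P u v) ⊆ {x : ℝ | ∃ n : ℤ, x = b' + n * L'}) → L' ≤ L u v)) ∧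
    -- (c) the numbers `L u v` generate the group `lam • ℤ`
    (AddSubgroup.closure {x : ℝ | ∃ u v : V, x = L u v} = AddSubgroup.zmultiples lam) ∧
    -- (d) `supp P_uv + supp P_vw − supp P_uw ⊆ lam • ℤ`
    (∀ u v z : V, ∀ a ∈ mSupport (P u v), ∀ a' ∈ mSupport (P v z), ∀ a'' ∈ mSupport (P u z),
      ∃ n : ℤ, a + a' - a'' = n * lam)

/-! Suppose `g = g₁ s l_w t`. The piece `S_g(F)` lies in `S_{g₁ s}(S_{l_w}(F))`, whose
`r_{g₁ s} c_w`-neighbourhood stays inside `S_{g₁ s}(U_w) ⊆ S_{g₁}(U)`. By the OSC this open set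
misses the closure of `S_{e₁}(U)`, which contains `S_e(F)` because `F ⊆ closure U`. Hence the two
pieces are at distance at least `r_{g₁ s} c_w > r_g c_w`, as `l_w` is nonempty. -/

section Similarity

variable {X Y : Type*}

theorem exists_homeomorph_of_dist_eq_mul [NormedAddCommGroup X] [NormedSpace ℝ X]
    [StrictConvexSpace ℝ X] [FiniteDimensional ℝ X] {f : X → X} {r : ℝ} (hr : 0 < r)
    (hf : ∀ x y, dist (f x) (f y) = r * dist x y) : ∃ φ : X ≃ₜ X, ⇑φ = f := by
  have hiso : Isometry fun x => r⁻¹ • f x := by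
    refine Isometry.of_dist_eq fun x y => ?_
    rw [dist_smul₀, hf, Real.norm_of_nonneg (inv_nonneg.2 hr.le), inv_mul_cancel_left₀ hr.ne']
  -- Mazur–Ulam makes `r⁻¹ • f` an affine isometry, hence an equivalence in finite dimension.
  have : Inhabited X := ⟨0⟩
  let ψ := hiso.affineIsometryOfStrictConvexSpace.toAffineIsometryEquiv rfl
  refine ⟨ψ.toHomeomorph.trans (Homeomorph.smulOfNeZero r hr.ne'), funext fun x => ?_⟩
  simp [ψ, smul_inv_smul₀ hr.ne']

theorem Metric.infDist_image_le_mul [PseudoMetricSpace X] [PseudoMetricSpace Y] {f : X → Y}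
    {r : ℝ} (hr : 0 < r) (hf : ∀ x y, dist (f x) (f y) ≤ r * dist x y) (x : X) (s : Set X) :
    infDist (f x) (f '' s) ≤ r * infDist x s := by
  rcases s.eq_empty_or_nonempty with rfl | hs
  · simp
  rw [← div_le_iff₀' hr, le_infDist hs]
  intro y hy
  rw [div_le_iff₀' hr]
  exact (infDist_le_dist_of_mem (mem_image_of_mem f hy)).trans (hf x y)

end Similarity

section SetDist

variable {X : Type} [PseudoMetricSpace X]

theorem setDist_le_dist {A B : Set X} {a b : X} (ha : a ∈ A) (hb : b ∈ B) :
    setDist A B ≤ dist a b :=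
  csInf_le ⟨0, by rintro _ ⟨x, -, y, -, rfl⟩; exact dist_nonneg⟩ ⟨a, ha, b, hb, rfl⟩

theorem le_setDist {A B : Set X} (hA : A.Nonempty) (hB : B.Nonempty) {d : ℝ}
    (h : ∀ a ∈ A, ∀ b ∈ B, d ≤ dist a b) : d ≤ setDist A B :=
  le_csInf (hA.image2 hB) <| by rintro _ ⟨a, ha, b, hb, rfl⟩; exact h a ha b hb

theorem mul_setDist_compl_le_dist {f : X → X} {r : ℝ} (hr : 0 ≤ r)
    (hf : ∀ x y, dist (f x) (f y) = r * dist x y) (hsurj : Function.Surjective f)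
    {K W : Set X} {x y : X} (hx : x ∉ f '' W) (hy : y ∈ K) :
    r * setDist K Wᶜ ≤ dist x (f y) := by
  obtain ⟨x, rfl⟩ := hsurj x
  have hxW : x ∈ Wᶜ := fun h => hx (mem_image_of_mem f h)
  rw [dist_comm, hf]
  exact mul_le_mul_of_nonneg_left (setDist_le_dist hy hxW) hr

end SetDist

namespace GIFS

variable {m : ℕ} {V E : Type} [Fintype V] [Fintype E] (G : GIFS m V E)

inductive IsWalk : V → V → List E → Prop
  | nil (u : V) : IsWalk u u []
  | cons {e : E} {v : V} {p : List E} : IsWalk (G.dst e) v p → IsWalk (G.src e) v (e :: p)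

variable {G}

theorem isWalk_cons_iff {u v : V} {e : E} {p : List E} :
    G.IsWalk u v (e :: p) ↔ G.src e = u ∧ G.IsWalk (G.dst e) v p := by
  constructor
  · rintro (_ | ⟨h⟩)
    exact ⟨rfl, h⟩
  · rintro ⟨rfl, h⟩
    exact h.cons

theorem isWalk_append_iff {u v : V} {p q : List E} :
    G.IsWalk u v (p ++ q) ↔ ∃ w, G.IsWalk u w p ∧ G.IsWalk w v q := by
  induction p generalizing u with
  | nil => exact ⟨fun h => ⟨u, .nil u, h⟩, by rintro ⟨w, ⟨⟩, h⟩; exact h⟩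
  | cons e p ih =>
    simp only [List.cons_append, isWalk_cons_iff, ih]
    constructor
    · rintro ⟨he, w, hp, hq⟩
      exact ⟨w, ⟨he, hp⟩, hq⟩
    · rintro ⟨w, ⟨he, hp⟩, hq⟩
      exact ⟨he, w, hp, hq⟩

theorem isWalk_nil_iff {u v : V} : G.IsWalk u v [] ↔ u = v :=
  ⟨by rintro ⟨⟩; rfl, by rintro rfl; exact .nil u⟩

theorem IsWalk.eq_of_ne_nil {u v u' v' : V} {p : List E} (h : G.IsWalk u v p)
    (h' : G.IsWalk u' v' p) (hp : p ≠ []) : u = u' ∧ v = v' := by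
  induction h generalizing u' with
  | nil => exact absurd rfl hp
  | @cons e v p hwalk ih =>
    obtain ⟨rfl, hwalk'⟩ := isWalk_cons_iff.1 h'
    refine ⟨rfl, ?_⟩
    by_cases hp : p = []
    · subst hp
      exact (isWalk_nil_iff.1 hwalk).symm.trans (isWalk_nil_iff.1 hwalk')
    · exact (ih hwalk' hp).2

theorem IsPathFrom.isWalk {u v : V} {p : List E} (h : G.IsPathFrom u v p) :
    G.IsWalk u v p := by
  obtain ⟨hne, hpath, hsrc, hdst⟩ := h
  induction p generalizing u with
  | nil => exact absurd rfl hne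
  | cons e q ih =>
    obtain rfl : G.src e = u := by simpa using hsrc
    refine IsWalk.cons ?_
    cases q with
    | nil =>
      obtain rfl : G.dst e = v := by simpa using hdst
      exact .nil _
    | cons f q =>
      have hpath' := List.isChain_cons_cons.1 hpath
      refine ih (by simp) hpath'.2 (by simp [hpath'.1]) ?_
      rwa [List.getLast?_cons_cons] at hdst

theorem pathDst_cons (v : V) (e : E) (p : List E) :
    G.pathDst v (e :: p) = G.pathDst (G.dst e) p := by
  cases p with
  | nil => rfl
  | cons f q => simp [pathDst, List.getLast?_eq_getLast_of_ne_nil]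

theorem IsWalk.pathDst_eq {u v : V} {p : List E} (h : G.IsWalk u v p) : G.pathDst u p = v := by
  induction h with
  | nil => rfl
  | cons _ ih => rw [pathDst_cons, ih]

theorem pathMap_cons (e : E) (p : List E) (x : Euc m) :
    G.pathMap (e :: p) x = G.map e (G.pathMap p x) := rfl

theorem pathMap_append (p q : List E) (x : Euc m) :
    G.pathMap (p ++ q) x = G.pathMap p (G.pathMap q x) := by
  induction p with
  | nil => rfl
  | cons e p ih => rw [List.cons_append, pathMap_cons, ih, pathMap_cons]

theorem pathRatio_cons (e : E) (p : List E) :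
    G.pathRatio (e :: p) = G.ratio e * G.pathRatio p := by
  simp [pathRatio]

theorem pathRatio_append (p q : List E) :
    G.pathRatio (p ++ q) = G.pathRatio p * G.pathRatio q := by
  simp [pathRatio]

theorem pathRatio_pos (p : List E) : 0 < G.pathRatio p :=
  List.prod_pos fun _ hr => by
    obtain ⟨e, -, rfl⟩ := List.mem_map.1 hr
    exact G.ratio_pos e

theorem pathRatio_le_one (p : List E) : G.pathRatio p ≤ 1 := by
  induction p with
  | nil => simp [pathRatio]
  | cons e p ih =>
    rw [pathRatio_cons]
    exact mul_le_one₀ (G.ratio_lt_one e).le (G.pathRatio_pos p).le ih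

theorem pathRatio_lt_one {p : List E} (hp : p ≠ []) : G.pathRatio p < 1 := by
  obtain ⟨e, p, rfl⟩ := List.exists_cons_of_ne_nil hp
  rw [pathRatio_cons]
  exact mul_lt_one_of_nonneg_of_lt_one_left (G.ratio_pos e).le (G.ratio_lt_one e)
    (G.pathRatio_le_one p)

theorem dist_pathMap (p : List E) (x y : Euc m) :
    dist (G.pathMap p x) (G.pathMap p y) = G.pathRatio p * dist x y := by
  induction p with
  | nil => simp [pathMap, pathRatio]
  | cons e p ih => rw [pathMap_cons, pathMap_cons, G.map_similarity, ih, pathRatio_cons, mul_assoc]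

theorem continuous_map (e : E) : Continuous (G.map e) := by
  obtain ⟨φ, hφ⟩ := exists_homeomorph_of_dist_eq_mul (G.ratio_pos e) (G.map_similarity e)
  exact hφ ▸ φ.continuous

variable {F U : V → Set (Euc m)}

theorem IsWalk.image_pathMap_subset {K : V → Set (Euc m)}
    (hK : ∀ e, G.map e '' K (G.dst e) ⊆ K (G.src e)) {u v : V} {p : List E}
    (h : G.IsWalk u v p) : G.pathMap p '' K v ⊆ K u := by
  induction h with
  | nil => simp [pathMap]
  | @cons e v p _ ih =>
    rintro _ ⟨x, hx, rfl⟩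
    exact hK e ⟨_, ih ⟨x, hx, rfl⟩, rfl⟩

theorem IsAttractor.image_map_subset (hF : G.IsAttractor F) (e : E) :
    G.map e '' F (G.dst e) ⊆ F (G.src e) := by
  rw [hF.2.2 (G.src e)]
  exact subset_biUnion_of_mem (u := fun e => G.map e '' F (G.dst e))
    (show e ∈ {f | G.src f = G.src e} from rfl)

theorem IsAttractor.subset_closure (hF : G.IsAttractor F) (hU : ∀ v, (U v).Nonempty)
    (hmaps : ∀ e, G.map e '' U (G.dst e) ⊆ U (G.src e)) (v : V) : F v ⊆ closure (U v) := by
  intro x hx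
  have : Nonempty V := ⟨v⟩
  obtain ⟨v₀, x₀, hx₀, hmax⟩ : ∃ v₀, ∃ x₀ ∈ F v₀,
      ∀ v, ∀ x ∈ F v, infDist x (U v) ≤ infDist x₀ (U v₀) := by
    choose y hyF hymax using fun v =>
      (hF.2.1 v).exists_isMaxOn (hF.1 v) (continuous_infDist_pt (U v)).continuousOn
    obtain ⟨v₀, hv₀⟩ := Finite.exists_max fun v => infDist (y v) (U v)
    exact ⟨v₀, y v₀, hyF v₀, fun v x hx => (hymax v hx).trans (hv₀ v)⟩
  -- The largest distance from `F` to `U` is contracted by some `S_e`, so it vanishes.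
  have hzero : infDist x₀ (U v₀) ≤ 0 := by
    rw [hF.2.2 v₀] at hx₀
    obtain ⟨e, rfl, y, hy, rfl⟩ : ∃ e, G.src e = v₀ ∧ ∃ y ∈ F (G.dst e), G.map e y = x₀ := by
      simpa using hx₀
    have hcontract : infDist (G.map e y) (U (G.src e)) ≤ G.ratio e * infDist y (U (G.dst e)) :=
      calc infDist (G.map e y) (U (G.src e))
          ≤ infDist (G.map e y) (G.map e '' U (G.dst e)) :=
            infDist_le_infDist_of_subset (hmaps e) ((hU _).image _)
        _ ≤ G.ratio e * infDist y (U (G.dst e)) :=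
            infDist_image_le_mul (G.ratio_pos e) (fun x y => (G.map_similarity e x y).le) _ _
    nlinarith [mul_le_mul_of_nonneg_left (hmax _ y hy) (G.ratio_pos e).le, G.ratio_lt_one e]
  rw [mem_closure_iff_infDist_zero (hU v)]
  exact le_antisymm ((hmax v x hx).trans hzero) infDist_nonneg

theorem OSCWith.disjoint_closure_image (hU : G.OSCWith U) {e f : E} (hsrc : G.src e = G.src f)
    (hne : e ≠ f) : Disjoint (closure (G.map e '' U (G.dst e))) (G.map f '' U (G.dst f)) := by
  obtain ⟨φ, hφ⟩ := exists_homeomorph_of_dist_eq_mul (G.ratio_pos f) (G.map_similarity f)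
  refine (disjoint_iff_inter_eq_empty.2 (hU.2.2 _ e f hsrc rfl hne)).closure_left ?_
  rw [← hφ]
  exact φ.isOpenMap _ (hU.1 _).2.1

theorem pathRatio_mul_setDist_compl_le_setDist (hF : G.IsAttractor F) (hU : G.OSCWith U) {e₁ g₁ : E}
    (hsrc : G.src e₁ = G.src g₁) (hne : e₁ ≠ g₁) {e s p t : List E} {ve w v vg : V}
    (he : G.IsWalk (G.dst e₁) ve e) (hs : G.IsWalk (G.dst g₁) w s)
    (ht : G.IsWalk v vg t) :
    G.pathRatio (g₁ :: s) * setDist (G.pathMap p '' F v) (U w)ᶜ ≤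
      setDist (G.pathMap (e₁ :: e) '' F ve) (G.pathMap (g₁ :: (s ++ p ++ t)) '' F vg) := by
  obtain ⟨φ, hφ⟩ :=
    exists_homeomorph_of_dist_eq_mul (G.pathRatio_pos (g₁ :: s)) (G.dist_pathMap _)
  have hFU := hF.subset_closure (fun v => (hU.1 v).1) hU.2.1
  refine le_setDist ((hF.1 ve).image _) ((hF.1 vg).image _) ?_
  rintro _ ⟨x, hx, rfl⟩ _ ⟨y, hy, rfl⟩
  have hxe : G.pathMap (e₁ :: e) x ∈ closure (G.map e₁ '' U (G.dst e₁)) :=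
    image_closure_subset_closure_image (G.continuous_map e₁)
      ⟨_, hFU _ (he.image_pathMap_subset hF.image_map_subset ⟨x, hx, rfl⟩), rfl⟩
  have hUg : G.pathMap (g₁ :: s) '' U w ⊆ G.map g₁ '' U (G.dst g₁) := by
    rintro _ ⟨z, hz, rfl⟩
    exact ⟨_, hs.image_pathMap_subset hU.2.1 ⟨z, hz, rfl⟩, rfl⟩
  have hy' : G.pathMap p (G.pathMap t y) ∈ G.pathMap p '' F v :=
    ⟨_, ht.image_pathMap_subset hF.image_map_subset ⟨y, hy, rfl⟩, rfl⟩
  rw [← List.cons_append, pathMap_append, ← List.cons_append, pathMap_append]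
  exact mul_setDist_compl_le_dist (G.pathRatio_pos _).le (G.dist_pathMap _) (hφ ▸ φ.surjective)
    (fun h => (hU.disjoint_closure_image hsrc hne).ne_of_mem hxe (hUg h) rfl) hy'

end GIFS

theorem statement19_general
    {m : ℕ} {V E : Type} [Fintype V] [Fintype E]
    (G : GIFS m V E)
    (F : V → Set (Euc m)) (hF : G.IsAttractor F)
    (U : V → Set (Euc m)) (hU : G.OSCWith U)
    (l : ℕ) (lu : V → List E)
    (hlu : ∀ u : V, ∃ v : V, G.IsPathFrom u v (lu u) ∧ (lu u).length = l ∧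
      G.pathMap (lu u) '' F v ⊆ U u)
    (c : V → ℝ)
    (hc : ∀ v : V, c v = setDist (G.pathMap (lu v) '' F (G.pathDst v (lu v))) ((U v)ᶜ))
    (hcpos : ∀ v : V, 0 < c v)
    (u ve vg w₀ : V) (e g : List E)
    (he : G.IsPathFrom u ve e) (hg : G.IsPathFrom u vg g)
    (hhead : e.head? ≠ g.head?)
    (hdist : setDist (G.pathMap e '' F ve) (G.pathMap g '' F vg) ≤ c w₀ * G.pathRatio g) :
    ¬ IsSubpath (lu w₀) g.tail := by
  rintro ⟨s, t, hst⟩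
  obtain ⟨v, hlw, -, -⟩ := hlu w₀
  obtain ⟨e₁, e, rfl⟩ := List.exists_cons_of_ne_nil he.1
  obtain ⟨g₁, g, rfl⟩ := List.exists_cons_of_ne_nil hg.1
  rw [List.tail_cons] at hst
  subst hst
  have hne : e₁ ≠ g₁ := by
    rintro rfl
    exact hhead rfl
  obtain ⟨he₁, he⟩ := GIFS.isWalk_cons_iff.1 he.isWalk
  obtain ⟨hg₁, hg⟩ := GIFS.isWalk_cons_iff.1 hg.isWalk
  obtain ⟨v', hsl, ht⟩ := GIFS.isWalk_append_iff.1 hg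
  obtain ⟨w, hs, hl⟩ := GIFS.isWalk_append_iff.1 hsl
  obtain ⟨rfl, rfl⟩ := hl.eq_of_ne_nil hlw.isWalk hlw.1
  have hkey := G.pathRatio_mul_setDist_compl_le_setDist hF hU (he₁.trans hg₁.symm) hne he hs ht
    (p := lu w)
  rw [← hl.pathDst_eq, ← hc] at hkey
  have hratio : G.pathRatio (g₁ :: (s ++ lu w ++ t)) =
      G.pathRatio (g₁ :: s) * G.pathRatio (lu w ++ t) := by
    simp only [GIFS.pathRatio_cons, GIFS.pathRatio_append]
    ring
  have hlt : G.pathRatio (lu w ++ t) < 1 := G.pathRatio_lt_one (by simp [hlw.1])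
  rw [hratio] at hdist
  nlinarith [mul_lt_mul_of_pos_left hlt (mul_pos (G.pathRatio_pos (g₁ :: s)) (hcpos w))]

/-- **Lemma 4.6.** Suppose the OSC holds with open sets `(U_v)`, fix paths `(l_v)` of
common length `l` with `S_{l_v}(F_{t(l_v)}) ⊆ U_v`, and let
`c_v = dist(S_{l_v}(F_{t(l_v)}), ℝ^m ∖ U_v) > 0`. If `e` and `g` are finite paths starting
at `u` whose first edges differ and
`dist(S_e(F_{t(e)}), S_g(F_{t(g)})) ≤ c_w · r_g` for some vertex `w`, then `l_w` is not a
subpath of `g₂⋯g_j` (the path `g` with its first edge removed). -/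
theorem statement19
    {m : ℕ} (hm : 1 ≤ m) {V E : Type} [Fintype V] [Fintype E]
    (G : GIFS m V E)
    (F : V → Set (Euc m)) (hF : G.IsAttractor F)
    (U : V → Set (Euc m)) (hU : G.OSCWith U)
    (l : ℕ) (hl : 0 < l) (lu : V → List E)
    (hlu : ∀ u : V, ∃ v : V, G.IsPathFrom u v (lu u) ∧ (lu u).length = l ∧
      G.pathMap (lu u) '' F v ⊆ U u)
    (c : V → ℝ)
    (hc : ∀ v : V, c v = setDist (G.pathMap (lu v) '' F (G.pathDst v (lu v))) ((U v)ᶜ))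
    (hcpos : ∀ v : V, 0 < c v)
    (u ve vg w₀ : V) (e g : List E)
    (he : G.IsPathFrom u ve e) (hg : G.IsPathFrom u vg g)
    (hhead : e.head? ≠ g.head?)
    (hdist : setDist (G.pathMap e '' F ve) (G.pathMap g '' F vg) ≤ c w₀ * G.pathRatio g) :
    ¬ IsSubpath (lu w₀) g.tail :=
  statement19_general G F hF U hU l lu hlu c hc hcpos u ve vg w₀ e g he hg hhead hdist
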